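/- arXiv:1306.1282 — 3 statements merged into one kernel-verified Lean document; each statement's English description precedes it below -/
import Mathlib

section
/- Let k be an infinite field, R = k[x,y], and V ⊆ R_j a k-vector subspace of the space of degree-j homogeneous forms with dim_k V = d. Then τ(V) := dim_k(R_1·V) − dim_k V satisfies 1 ≤ τ(V) ≤ min(d, j+1−d+1) whenever 1 ≤ d ≤ j+1 and V ≠ 0. Here R_1·V denotes the span of all products ℓf with ℓ ∈ R_1 and f ∈ V. -/
/-!
Write `W = R₁·V = x·V + y·V`. The upper bounds are dimension counts: `W` is a sum of two copies of
`V` and lies in `R_{j+1}`, of dimension `j + 2`. For the lower bound, `x·V ⊆ W` has dimension `d`,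
so `τ(V) = 0` would force `y·V ⊆ x·V`, hence `yⁿ·V ⊆ xⁿ·V` for all `n`. For a nonzero `f ∈ V` this
makes `x^{j+1}` divide `y^{j+1} f`, hence `f`, which is impossible in degree `j`.
-/

open MvPolynomial
open scoped Pointwise

theorem Submodule.pow_smul_le_pow_smul {R A : Type*} [CommSemiring R] [CommSemiring A]
    [Algebra R A] {a b : A} {V : Submodule R A} (h : a • V ≤ b • V) (m : ℕ) :
    a ^ m • V ≤ b ^ m • V := by
  induction m with
  | zero => simp
  | succ m ih =>
    calc a ^ (m + 1) • V = a ^ m • a • V := by rw [pow_succ, mul_smul]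
      _ ≤ a ^ m • b • V := Submodule.map_mono h
      _ = b • a ^ m • V := smul_comm _ _ _
      _ ≤ b • b ^ m • V := Submodule.map_mono ih
      _ = b ^ (m + 1) • V := by rw [pow_succ', mul_smul]

theorem Submodule.span_setOf_mul_eq_mul {R A : Type*} [CommSemiring R] [Semiring A]
    [Algebra R A] (M N : Submodule R A) :
    span R {p | ∃ a ∈ M, ∃ b ∈ N, p = a * b} = M * N := by
  rw [mul_eq_span_mul_set]
  congr 1
  ext p
  simp [Set.mem_mul, eq_comm]

theorem Submodule.finrank_pointwise_smul {K A : Type*} [Field K] [CommRing A] [IsDomain A]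
    [Algebra K A] {a : A} (ha : a ≠ 0) (V : Submodule K A) :
    Module.finrank K ↥(a • V) = Module.finrank K V :=
  (LinearEquiv.finrank_eq
    (V.equivMapOfInjective (DistribSMul.toLinearMap K A a) fun _ _ ↦ mul_left_cancel₀ ha)).symm

namespace MvPolynomial

theorem not_X_smul_le_X_smul {σ R : Type*} [CommRing R] [IsDomain R] {i i' : σ} (hi : i ≠ i')
    {n : ℕ} {V : Submodule R (MvPolynomial σ R)} (hV : V ≤ homogeneousSubmodule σ R n)
    (hV0 : V ≠ ⊥) :
    ¬ (X i : MvPolynomial σ R) • V ≤ (X i' : MvPolynomial σ R) • V := by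
  intro h
  obtain ⟨f, hfV, hf0⟩ := V.ne_bot_iff.mp hV0
  obtain ⟨g, -, hg⟩ := Submodule.pow_smul_le_pow_smul h (n + 1)
    (Submodule.smul_mem_pointwise_smul f (X i ^ (n + 1)) V hfV)
  have hdvd : X i' ^ (n + 1) ∣ f := by
    refine X_prime.pow_dvd_of_dvd_mul_left (n + 1) ?_ ⟨g, hg.symm⟩
    exact fun hX ↦ hi.symm (X_dvd_X.mp (X_prime.dvd_of_dvd_pow hX))
  have hdeg := totalDegree_le_of_dvd_of_isDomain hdvd hf0
  rw [totalDegree_X_pow, (hV hfV).totalDegree hf0] at hdeg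
  omega

theorem homogeneousSubmodule_one_mul_fin_two {R : Type*} [CommSemiring R]
    (V : Submodule R (MvPolynomial (Fin 2) R)) :
    homogeneousSubmodule (Fin 2) R 1 * V =
      (X 0 : MvPolynomial (Fin 2) R) • V ⊔ (X 1 : MvPolynomial (Fin 2) R) • V := by
  have hX : Set.range (X : Fin 2 → MvPolynomial (Fin 2) R) = {X 0, X 1} := by
    ext; simp [Fin.exists_fin_two, eq_comm]
  rw [homogeneousSubmodule_one_eq_span_X, hX, Submodule.span_insert, Submodule.sup_mul,
    Submodule.span_singleton_mul, Submodule.span_singleton_mul]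

instance {σ R : Type*} [CommSemiring R] [Finite σ] (n : ℕ) :
    Module.Finite R (homogeneousSubmodule σ R n) :=
  Module.Finite.iff_fg.mpr (homogeneousSubmodule_fg σ R n)

theorem degree_eq_add_fin_two (d : Fin 2 →₀ ℕ) : d.degree = d 0 + d 1 := by
  rw [Finsupp.degree_eq_sum, Fin.sum_univ_two]

theorem finrank_homogeneousSubmodule_fin_two_le (K : Type*) [Field K] (n : ℕ) :
    Module.finrank K (homogeneousSubmodule (Fin 2) K n) ≤ n + 1 := by
  let s : Set (Fin 2 →₀ ℕ) := {d | d.degree = n}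
  have hlt (d : s) : d.1 0 < n + 1 := by
    have := d.2
    simp only [s, Set.mem_ofPred_eq, degree_eq_add_fin_two] at this
    omega
  have hinj : Function.Injective fun d : s ↦ (⟨d.1 0, hlt d⟩ : Fin (n + 1)) := by
    rintro ⟨d, hd⟩ ⟨d', hd'⟩ h
    simp only [s, Set.mem_ofPred_eq, degree_eq_add_fin_two, Fin.mk.injEq] at hd hd' h
    ext i
    fin_cases i <;> simp <;> omega
  have : Finite s := Finite.of_injective _ hinj
  have : Fintype s := Fintype.ofFinite s
  rw [homogeneousSubmodule_eq_finsupp_supported,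
    (AddMonoidAlgebra.supportedEquivFinsupp s).finrank_eq, Module.finrank_finsupp_self]
  simpa using Fintype.card_le_of_injective _ hinj

end MvPolynomial

theorem tau_bounds_general (k : Type*) [Field k] (j d : ℕ)
    (V : Submodule k (MvPolynomial (Fin 2) k))
    (hV : V ≤ homogeneousSubmodule (Fin 2) k j)
    (hVd : Module.finrank k V = d) (hV0 : V ≠ ⊥) :
    1 ≤ Module.finrank k
        (Submodule.span k {p : MvPolynomial (Fin 2) k |
          ∃ ℓ ∈ homogeneousSubmodule (Fin 2) k 1, ∃ f ∈ V, p = ℓ * f}) - d ∧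
    Module.finrank k
        (Submodule.span k {p : MvPolynomial (Fin 2) k |
          ∃ ℓ ∈ homogeneousSubmodule (Fin 2) k 1, ∃ f ∈ V, p = ℓ * f}) - d
      ≤ min d (j + 2 - d) := by
  rw [Submodule.span_setOf_mul_eq_mul, homogeneousSubmodule_one_mul_fin_two]
  set x : MvPolynomial (Fin 2) k := X 0
  set y : MvPolynomial (Fin 2) k := X 1
  have hWdeg : x • V ⊔ y • V ≤ homogeneousSubmodule (Fin 2) k (j + 1) := by
    rw [← homogeneousSubmodule_one_mul_fin_two, add_comm]
    exact (mul_le_mul_right hV _).trans (homogeneousSubmodule_mul 1 j)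
  have : Module.Finite k V := Submodule.finiteDimensional_of_le hV
  have : Module.Finite k ↥(x • V) := Module.Finite.map V _
  have : Module.Finite k ↥(y • V) := Module.Finite.map V _
  have : Module.Finite k ↥(x • V ⊔ y • V) := Submodule.finiteDimensional_of_le hWdeg
  have hxV : Module.finrank k ↥(x • V) = d := by
    rw [Submodule.finrank_pointwise_smul (X_ne_zero 0), hVd]
  have hyV : Module.finrank k ↥(y • V) = d := by
    rw [Submodule.finrank_pointwise_smul (X_ne_zero 1), hVd]
  have hle_top :=
    (Submodule.finrank_mono hWdeg).trans (finrank_homogeneousSubmodule_fin_two_le k _)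
  have hle_sum := Submodule.finrank_add_le_finrank_add_finrank (x • V) (y • V)
  have hlt : x • V < x • V ⊔ y • V :=
    left_lt_sup.mpr (not_X_smul_le_X_smul Fin.zero_ne_one.symm hV hV0)
  have hlt_dim := Submodule.finrank_lt_finrank_of_lt hlt
  omega

theorem tau_bounds (k : Type*) [Field k] [Infinite k] (j d : ℕ)
    (hd1 : 1 ≤ d) (hd2 : d ≤ j + 1)
    (V : Submodule k (MvPolynomial (Fin 2) k))
    (hV : V ≤ homogeneousSubmodule (Fin 2) k j)
    (hVd : Module.finrank k V = d) (hV0 : V ≠ ⊥) :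
    1 ≤ Module.finrank k
        (Submodule.span k {p : MvPolynomial (Fin 2) k |
          ∃ ℓ ∈ homogeneousSubmodule (Fin 2) k 1, ∃ f ∈ V, p = ℓ * f}) - d ∧
    Module.finrank k
        (Submodule.span k {p : MvPolynomial (Fin 2) k |
          ∃ ℓ ∈ homogeneousSubmodule (Fin 2) k 1, ∃ f ∈ V, p = ℓ * f}) - d
      ≤ min d (j + 2 - d) :=
  tau_bounds_general k j d V hV hVd hV0
end

section
/- Let R = k[x,y], V ⊆ R_j a subspace of dimension d with 1 ≤ d ≤ j, and define the ancestor ideal V̄ = Σ_{k=1}^{j} (V : R_k) ⊕ (V)_{≥j}, where V : R_k = {f ∈ R_{j-k} : R_k·f ⊆ V}. Then V̄ ∩ m^j = (V), where m = (x,y) and (V) is the ideal generated by V; moreover V̄ is the largest homogeneous ideal I of R with I ∩ m^j = (V). -/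
/-!
Membership in `m^j` only asks that every monomial have degree `≥ j`, so `V̄ ∩ m^j` is the part
of `V̄` in degrees `≥ j`. There `V̄` agrees with `(V)`: a monomial of degree `n ≥ m` is divisible
by one of degree `m`, so `R_m f ⊆ V` gives `R_n f ⊆ (V)`. Conversely, if `I` is homogeneous with
`I ∩ m^j = (V)` and `f ∈ I` is homogeneous of degree `e < j`, then
`R_{j-e} f ⊆ I ∩ R_j = (V)_j = V`, so `f` is one of the generators `V : R_{j-e}` of `V̄`.
-/

namespace MvPolynomial

variable {σ R : Type*} [CommSemiring R]

section Graded

attribute [local instance] gradedAlgebra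

lemma homogeneousComponent_mul_of_isHomogeneous_right {a b : MvPolynomial σ R} {e : ℕ}
    (hb : b.IsHomogeneous e) (n : ℕ) :
    homogeneousComponent n (a * b) =
      if e ≤ n then homogeneousComponent (n - e) a * b else 0 := by
  have := DirectSum.coe_decompose_mul_of_right_mem (homogeneousSubmodule σ R) n (a := a) hb
  simpa [← decomposition.decompose'_apply] using this

end Graded

lemma IsHomogeneous.degree_eq_of_mem_support {p : MvPolynomial σ R} {n : ℕ}
    (hp : p.IsHomogeneous n) {d : σ →₀ ℕ} (hd : d ∈ p.support) : d.degree = n := by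
  rw [Finsupp.degree_eq_weight_one]
  exact hp (mem_support_iff.mp hd)

lemma IsHomogeneous.mem_pow_idealOfVars {p : MvPolynomial σ R} {n j : ℕ}
    (hp : p.IsHomogeneous n) (hj : j ≤ n) : p ∈ idealOfVars σ R ^ j :=
  (mem_pow_idealOfVars_iff j p).mpr fun _ hd => hj.trans_eq (hp.degree_eq_of_mem_support hd).symm

lemma homogeneousComponent_eq_zero_of_mem_pow_idealOfVars {p : MvPolynomial σ R} {i j : ℕ}
    (hp : p ∈ idealOfVars σ R ^ j) (hi : i < j) : homogeneousComponent i p = 0 :=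
  homogeneousComponent_eq_zero' i p fun d hd =>
    (hi.trans_le ((mem_pow_idealOfVars_iff j p).mp hp d hd)).ne'

lemma mem_of_forall_homogeneousComponent_mem {I : Ideal (MvPolynomial σ R)}
    {p : MvPolynomial σ R} (h : ∀ i, homogeneousComponent i p ∈ I) : p ∈ I := by
  rw [← sum_homogeneousComponent p]
  exact Ideal.sum_mem _ fun i _ => h i

lemma homogeneousComponent_mem_of_mem_ideal_span {S : Set (MvPolynomial σ R)}
    {W : Submodule R (MvPolynomial σ R)} {n : ℕ}
    (hS : ∀ s ∈ S, ∀ r, homogeneousComponent n (r * s) ∈ W) {p : MvPolynomial σ R}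
    (hp : p ∈ Ideal.span S) : homogeneousComponent n p ∈ W := by
  obtain ⟨c, hc, rfl⟩ := Submodule.mem_span_set.mp hp
  rw [Finsupp.sum, map_sum]
  exact Submodule.sum_mem _ fun s hs => hS s (hc hs) (c s)

lemma span_X_pair_eq_idealOfVars :
    Ideal.span {(X 0 : MvPolynomial (Fin 2) R), X 1} = idealOfVars (Fin 2) R := by
  congr 1
  ext
  simp [Fin.exists_fin_two, eq_comm]

lemma mul_mem_of_isHomogeneous_zero {V : Submodule R (MvPolynomial σ R)}
    {g v : MvPolynomial σ R} (hg : g.IsHomogeneous 0) (hv : v ∈ V) : g * v ∈ V := by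
  rw [← homogeneousComponent_eq_self hg, homogeneousComponent_zero, ← smul_eq_C_mul]
  exact V.smul_mem _ hv

lemma mul_mem_ideal_span_of_forall_mul_mem {V : Submodule R (MvPolynomial σ R)}
    {f g : MvPolynomial σ R} {m n : ℕ}
    (hf : ∀ g ∈ homogeneousSubmodule σ R m, g * f ∈ V) (hg : g.IsHomogeneous n) (hmn : m ≤ n) :
    g * f ∈ Ideal.span (V : Set (MvPolynomial σ R)) := by
  rw [← support_sum_monomial_coeff g, Finset.sum_mul]
  refine Ideal.sum_mem _ fun d hd => ?_
  obtain ⟨e, hed, he⟩ :=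
    d.exists_le_degree_eq m (hmn.trans_eq (hg.degree_eq_of_mem_support hd).symm)
  have hsplit : monomial d (coeff d g) = monomial (d - e) (coeff d g) * monomial e (1 : R) := by
    rw [monomial_mul, mul_one, tsub_add_cancel_of_le hed]
  rw [hsplit, mul_assoc]
  exact Ideal.mul_mem_left _ _ (Ideal.subset_span (hf _ (isHomogeneous_monomial 1 he)))

lemma mem_of_isHomogeneous_of_mem_ideal_span {V : Submodule R (MvPolynomial σ R)} {j : ℕ}
    (hV : V ≤ homogeneousSubmodule σ R j) {q : MvPolynomial σ R} (hq : q.IsHomogeneous j)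
    (hqV : q ∈ Ideal.span (V : Set (MvPolynomial σ R))) : q ∈ V := by
  rw [← homogeneousComponent_eq_self hq]
  refine homogeneousComponent_mem_of_mem_ideal_span (fun v hv r => ?_) hqV
  rw [homogeneousComponent_mul_of_isHomogeneous_right (hV hv), if_pos le_rfl, Nat.sub_self]
  exact mul_mem_of_isHomogeneous_zero (homogeneousComponent_isHomogeneous 0 r) hv

/-- `V̄`, generated by the colon spaces `V : R_m ⊆ R_{j-m}` for `m ≤ j` (`m = 0` gives `V`). -/
noncomputable def ancestorIdeal (V : Submodule R (MvPolynomial σ R)) (j : ℕ) :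
    Ideal (MvPolynomial σ R) :=
  Ideal.span {f | ∃ m : ℕ, m ≤ j ∧ f ∈ homogeneousSubmodule σ R (j - m) ∧
    ∀ g ∈ homogeneousSubmodule σ R m, g * f ∈ V}

variable {V : Submodule R (MvPolynomial σ R)} {j : ℕ}

lemma span_le_ancestorIdeal (hV : V ≤ homogeneousSubmodule σ R j) :
    Ideal.span (V : Set (MvPolynomial σ R)) ≤ ancestorIdeal V j :=
  Ideal.span_mono fun _ hv =>
    ⟨0, j.zero_le, hV hv, fun _ hg => mul_mem_of_isHomogeneous_zero hg hv⟩

lemma homogeneousComponent_mem_span_of_mem_ancestorIdeal {p : MvPolynomial σ R}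
    (hp : p ∈ ancestorIdeal V j) {i : ℕ} (hi : j ≤ i) :
    homogeneousComponent i p ∈ Ideal.span (V : Set (MvPolynomial σ R)) := by
  refine homogeneousComponent_mem_of_mem_ideal_span
    (W := (Ideal.span (V : Set (MvPolynomial σ R))).restrictScalars R) ?_ hp
  rintro f ⟨m, hm, hf, hfV⟩ r
  rw [homogeneousComponent_mul_of_isHomogeneous_right hf]
  split_ifs
  · exact mul_mem_ideal_span_of_forall_mul_mem hfV (homogeneousComponent_isHomogeneous _ r)
      (by omega)
  · exact zero_mem _

lemma ancestorIdeal_inf_pow_idealOfVars (hV : V ≤ homogeneousSubmodule σ R j) :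
    ancestorIdeal V j ⊓ idealOfVars σ R ^ j = Ideal.span (V : Set (MvPolynomial σ R)) := by
  apply le_antisymm
  · rintro p ⟨hpA, hpm⟩
    refine mem_of_forall_homogeneousComponent_mem fun i => ?_
    rcases lt_or_ge i j with hij | hji
    · rw [homogeneousComponent_eq_zero_of_mem_pow_idealOfVars hpm hij]
      exact zero_mem _
    · exact homogeneousComponent_mem_span_of_mem_ancestorIdeal hpA hji
  · refine le_inf (span_le_ancestorIdeal hV) (Ideal.span_le.mpr fun v hv => ?_)
    exact (hV hv).mem_pow_idealOfVars le_rfl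

lemma le_ancestorIdeal (hV : V ≤ homogeneousSubmodule σ R j) {I : Ideal (MvPolynomial σ R)}
    (hI : ∀ p ∈ I, ∀ i, homogeneousComponent i p ∈ I)
    (hIV : I ⊓ idealOfVars σ R ^ j = Ideal.span (V : Set (MvPolynomial σ R))) :
    I ≤ ancestorIdeal V j := by
  intro p hp
  refine mem_of_forall_homogeneousComponent_mem fun e => ?_
  have hqI := hI p hp e
  have hq := homogeneousComponent_isHomogeneous e p
  rcases lt_or_ge e j with hej | hje
  · refine Ideal.subset_span
      ⟨j - e, j.sub_le e, by rwa [Nat.sub_sub_self hej.le], fun g hg => ?_⟩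
    have hgq : (g * homogeneousComponent e p).IsHomogeneous j := by
      simpa [Nat.sub_add_cancel hej.le] using hg.mul hq
    refine mem_of_isHomogeneous_of_mem_ideal_span hV hgq ?_
    rw [← hIV]
    exact ⟨I.mul_mem_left g hqI, hgq.mem_pow_idealOfVars le_rfl⟩
  · apply span_le_ancestorIdeal hV
    rw [← hIV]
    exact ⟨hqI, hq.mem_pow_idealOfVars hje⟩

end MvPolynomial

open MvPolynomial

theorem ancestor_ideal_property_general (k : Type*) [Field k] (j : ℕ)
    (V : Submodule k (MvPolynomial (Fin 2) k))
    (hV : V ≤ homogeneousSubmodule (Fin 2) k j) :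
    Ideal.span {f : MvPolynomial (Fin 2) k |
        ∃ m : ℕ, m ≤ j ∧ f ∈ homogeneousSubmodule (Fin 2) k (j - m) ∧
          ∀ g ∈ homogeneousSubmodule (Fin 2) k m, g * f ∈ V}
      ⊓ (Ideal.span {(X 0 : MvPolynomial (Fin 2) k), X 1}) ^ j
      = Ideal.span (V : Set (MvPolynomial (Fin 2) k)) ∧
    ∀ I : Ideal (MvPolynomial (Fin 2) k),
      (∀ p ∈ I, ∀ i : ℕ, homogeneousComponent i p ∈ I) →
      I ⊓ (Ideal.span {(X 0 : MvPolynomial (Fin 2) k), X 1}) ^ j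
        = Ideal.span (V : Set (MvPolynomial (Fin 2) k)) →
      I ≤ Ideal.span {f : MvPolynomial (Fin 2) k |
        ∃ m : ℕ, m ≤ j ∧ f ∈ homogeneousSubmodule (Fin 2) k (j - m) ∧
          ∀ g ∈ homogeneousSubmodule (Fin 2) k m, g * f ∈ V} := by
  rw [span_X_pair_eq_idealOfVars]
  exact ⟨ancestorIdeal_inf_pow_idealOfVars hV, fun _ hI hIV => le_ancestorIdeal hV hI hIV⟩

/-- The ancestor ideal `V̄` (generated by the colon spaces `V : R_k` together with `V`)
satisfies `V̄ ∩ m^j = (V)` and is the largest homogeneous ideal with this property. -/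
theorem ancestor_ideal_property (k : Type*) [Field k] (j d : ℕ)
    (hd1 : 1 ≤ d) (hdj : d ≤ j)
    (V : Submodule k (MvPolynomial (Fin 2) k))
    (hV : V ≤ homogeneousSubmodule (Fin 2) k j)
    (hVd : Module.finrank k V = d) :
    Ideal.span {f : MvPolynomial (Fin 2) k |
        ∃ m : ℕ, m ≤ j ∧ f ∈ homogeneousSubmodule (Fin 2) k (j - m) ∧
          ∀ g ∈ homogeneousSubmodule (Fin 2) k m, g * f ∈ V}
      ⊓ (Ideal.span {(X 0 : MvPolynomial (Fin 2) k), X 1}) ^ j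
      = Ideal.span (V : Set (MvPolynomial (Fin 2) k)) ∧
    ∀ I : Ideal (MvPolynomial (Fin 2) k),
      (∀ p ∈ I, ∀ i : ℕ, homogeneousComponent i p ∈ I) →
      I ⊓ (Ideal.span {(X 0 : MvPolynomial (Fin 2) k), X 1}) ^ j
        = Ideal.span (V : Set (MvPolynomial (Fin 2) k)) →
      I ≤ Ideal.span {f : MvPolynomial (Fin 2) k |
        ∃ m : ℕ, m ≤ j ∧ f ∈ homogeneousSubmodule (Fin 2) k (j - m) ∧
          ∀ g ∈ homogeneousSubmodule (Fin 2) k m, g * f ∈ V} :=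
  ancestor_ideal_property_general k j V hV
end

section
/- Let R = k[x,y] and V ⊆ R_j a subspace of dimension d. If dim_k(R_1·V) = d+1 (i.e., τ(V) = 1 with d ≥ 1), equivalently V = f·R_{d-1} for some form f of degree j−d+1, then dim_k(R_i · V) = d + i for all i ≥ 0, where R_i·V is the span of products of degree-i forms with elements of V. In particular the Hilbert function of R/(V) in degree j+i is (j+i+1) − (d+i) = j+1−d for all i ≥ 0. -/
/-!
Write `L = span{x, y} = R_1` and `a_i = dim (L^i · V)`. Since `L · U = xU + yU` and
`xU ∩ yU ⊇ xy·W` when `U = L · W`, the sequence `a_i` has nonincreasing first differences: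
`a_{i+2} - a_{i+1} ≤ a_{i+1} - a_i`. On the other hand `yW ⊄ xW` for every `W ≠ 0` (otherwise
`x^m ∣ y^m f`, hence `x^m ∣ f`, for all `m` and every `f ∈ W`), so `a_i` is strictly increasing.
With `a_1 - a_0 = 1` all differences are therefore `1`.
-/

open MvPolynomial Module Pointwise

namespace Submodule

variable {k A : Type*} [Field k] [CommRing A] [Algebra k A] {a b : A}

instance finiteDimensional_smul (a : A) (W : Submodule k A) [FiniteDimensional k W] :
    FiniteDimensional k (a • W : Submodule k A) :=
  inferInstanceAs (FiniteDimensional k (W.map (DistribSMul.toLinearMap k A a)))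

theorem finrank_smul_of_isLeftRegular (ha : IsLeftRegular a) (W : Submodule k A) :
    finrank k (a • W : Submodule k A) = finrank k W :=
  (LinearEquiv.finrank_eq (equivMapOfInjective _ ha W)).symm

theorem finiteDimensional_of_smul (ha : IsLeftRegular a) {W : Submodule k A}
    [FiniteDimensional k (a • W : Submodule k A)] : FiniteDimensional k W :=
  Module.Finite.equiv (equivMapOfInjective (DistribSMul.toLinearMap k A a) ha W).symm

theorem span_pair_mul (a b : A) (W : Submodule k A) :
    span k {a, b} * W = a • W ⊔ b • W := by
  rw [span_insert, sup_mul, span_singleton_mul, span_singleton_mul]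

instance finiteDimensional_span_pair_mul (a b : A) (W : Submodule k A) [FiniteDimensional k W] :
    FiniteDimensional k (span k {a, b} * W : Submodule k A) := by
  rw [span_pair_mul]; infer_instance

theorem finrank_lt_finrank_span_pair_mul (ha : IsLeftRegular a) {W : Submodule k A}
    [FiniteDimensional k W] (h : ¬ b • W ≤ a • W) :
    finrank k W < finrank k (span k {a, b} * W : Submodule k A) := by
  rw [← finrank_smul_of_isLeftRegular ha W, span_pair_mul]
  exact finrank_lt_finrank_of_lt <| lt_of_le_of_ne le_sup_left fun he => h (he ▸ le_sup_right)

theorem finrank_span_pair_mul_mul_add_le (ha : IsLeftRegular a) (hb : IsLeftRegular b)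
    (W : Submodule k A) [FiniteDimensional k W] :
    finrank k (span k {a, b} * (span k {a, b} * W) : Submodule k A) + finrank k W ≤
      2 * finrank k (span k {a, b} * W : Submodule k A) := by
  set U := span k {a, b} * W
  have hU : U = a • W ⊔ b • W := span_pair_mul a b W
  have hab : a • b • W ≤ a • U ⊓ b • U := by
    refine le_inf (smul_le_smul_left a (hU ▸ le_sup_right)) ?_
    rw [smul_smul, mul_comm, ← smul_smul]
    exact smul_le_smul_left b (hU ▸ le_sup_left)
  have hinf := finrank_mono hab
  have hsum := finrank_sup_add_finrank_inf_eq (a • U) (b • U)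
  rw [finrank_smul_of_isLeftRegular ha, finrank_smul_of_isLeftRegular hb] at hinf hsum
  rw [span_pair_mul a b U]
  omega

theorem finrank_span_pair_pow_mul (ha : IsLeftRegular a) (hb : IsLeftRegular b)
    (hab : ∀ W : Submodule k A, b • W ≤ a • W → W = ⊥) {W : Submodule k A}
    (hW : finrank k (span k {a, b} * W : Submodule k A) = finrank k W + 1) (i : ℕ) :
    finrank k (span k {a, b} ^ i * W : Submodule k A) = finrank k W + i := by
  set L := span k {a, b}
  have hmul_succ (i : ℕ) : L ^ (i + 1) * W = L * (L ^ i * W) := by rw [pow_succ', mul_assoc]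
  have : FiniteDimensional k (L * W : Submodule k A) := finite_of_finrank_pos (by omega)
  have : FiniteDimensional k (a • W : Submodule k A) :=
    finiteDimensional_of_le (span_pair_mul a b W ▸ le_sup_left)
  have := finiteDimensional_of_smul ha (W := W)
  have hfin (i : ℕ) : FiniteDimensional k (L ^ i * W : Submodule k A) := by
    induction i with
    | zero => rwa [pow_zero, one_mul]
    | succ i ih => rw [hmul_succ]; infer_instance
  have hstep (i : ℕ) : finrank k (L ^ (i + 1) * W : Submodule k A) =
      finrank k (L ^ i * W : Submodule k A) + 1 := by
    induction i with
    | zero => rwa [pow_one, pow_zero, one_mul]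
    | succ i ih =>
      have hne : L ^ (i + 1) * W ≠ ⊥ := fun h0 => by
        rw [h0, finrank_bot] at ih; omega
      have hlower := finrank_lt_finrank_span_pair_mul ha (fun h => hne (hab _ h))
      have hupper := finrank_span_pair_mul_mul_add_le ha hb (L ^ i * W)
      rw [← hmul_succ] at hlower
      rw [← hmul_succ, ← hmul_succ] at hupper
      omega
  induction i with
  | zero => rw [pow_zero, one_mul, add_zero]
  | succ i ih => rw [hstep, ih, add_assoc]

end Submodule

namespace MvPolynomial

theorem homogeneousSubmodule_one_eq_span_X_zero_X_one {R : Type*} [CommSemiring R] :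
    homogeneousSubmodule (Fin 2) R 1 = Submodule.span R {X 0, X 1} := by
  rw [homogeneousSubmodule_one_eq_span_X]
  congr
  ext p
  simp [Fin.exists_fin_two, eq_comm]

variable {σ R : Type*} [CommRing R] [IsDomain R]

theorem eq_bot_of_X_smul_le_X_smul {s t : σ} (hst : s ≠ t) {W : Submodule R (MvPolynomial σ R)}
    (h : (X t : MvPolynomial σ R) • W ≤ (X s : MvPolynomial σ R) • W) : W = ⊥ := by
  refine (Submodule.eq_bot_iff W).2 fun f hf => ?_
  have hpow (m : ℕ) : ∃ g ∈ W, X t ^ m * f = X s ^ m * g := by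
    induction m with
    | zero => exact ⟨f, hf, by rw [pow_zero, pow_zero]⟩
    | succ m ih =>
      obtain ⟨g, hg, hfg⟩ := ih
      obtain ⟨g', hg', hgg'⟩ := (Submodule.mem_smul_pointwise_iff_exists _ _ _).1
        (h (Submodule.smul_mem_pointwise_smul g (X t) W hg))
      replace hgg' : X s * g' = X t * g := hgg'
      exact ⟨g', hg', by linear_combination X t * hfg - X s ^ m * hgg'⟩
  by_contra hf0
  obtain ⟨g, -, hfg⟩ := hpow (f.totalDegree + 1)
  have hprime : Prime (X s : MvPolynomial σ R) := X_prime
  have hdvd : X s ^ (f.totalDegree + 1) ∣ f :=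
    hprime.pow_dvd_of_dvd_mul_left _
      (fun h => hst (X_dvd_X.1 (hprime.dvd_of_dvd_pow h))) ⟨g, hfg⟩
  have := totalDegree_le_of_dvd_of_isDomain hdvd hf0
  rw [totalDegree_X_pow] at this
  omega

end MvPolynomial

theorem tau_one_hilbert_general (k : Type*) [Field k] (j d : ℕ)
    (V : Submodule k (MvPolynomial (Fin 2) k))
    (hVd : Module.finrank k V = d)
    (htau : Module.finrank k
      (Submodule.span k {p : MvPolynomial (Fin 2) k |
        ∃ g ∈ homogeneousSubmodule (Fin 2) k 1, ∃ f ∈ V, p = g * f}) = d + 1) :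
    ∀ i : ℕ,
      Module.finrank k
        (Submodule.span k {p : MvPolynomial (Fin 2) k |
          ∃ g ∈ homogeneousSubmodule (Fin 2) k i, ∃ f ∈ V, p = g * f}) = d + i ∧
      (j + i + 1) - (d + i) = j + 1 - d := by
  have hspan (i : ℕ) : Submodule.span k {p : MvPolynomial (Fin 2) k |
      ∃ g ∈ homogeneousSubmodule (Fin 2) k i, ∃ f ∈ V, p = g * f} =
      Submodule.span k {X 0, X 1} ^ i * V := by
    rw [← homogeneousSubmodule_one_pow, homogeneousSubmodule_one_eq_span_X_zero_X_one,
      Submodule.mul_eq_span_mul_set]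
    congr 1
    ext p
    simp [Set.mem_mul, eq_comm]
  have hX (s : Fin 2) : IsLeftRegular (X s : MvPolynomial (Fin 2) k) :=
    (IsRegular.of_ne_zero (X_ne_zero s)).left
  rw [hspan, pow_one, ← hVd] at htau
  intro i
  refine ⟨?_, by omega⟩
  rw [hspan, ← hVd]
  exact Submodule.finrank_span_pair_pow_mul (hX 0) (hX 1)
    (fun _ => eq_bot_of_X_smul_le_X_smul (by decide)) htau i

/-- If `τ(V) = 1`, i.e. `dim R_1·V = d + 1`, then `dim (R_i·V) = d + i` for all `i`,
and the Hilbert function of `R/(V)` in degree `j+i` is the constant `j+1-d`. -/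
theorem tau_one_hilbert (k : Type*) [Field k] (j d : ℕ) (hd : 1 ≤ d)
    (V : Submodule k (MvPolynomial (Fin 2) k))
    (hV : V ≤ homogeneousSubmodule (Fin 2) k j)
    (hVd : Module.finrank k V = d)
    (htau : Module.finrank k
      (Submodule.span k {p : MvPolynomial (Fin 2) k |
        ∃ g ∈ homogeneousSubmodule (Fin 2) k 1, ∃ f ∈ V, p = g * f}) = d + 1) :
    ∀ i : ℕ,
      Module.finrank k
        (Submodule.span k {p : MvPolynomial (Fin 2) k |
          ∃ g ∈ homogeneousSubmodule (Fin 2) k i, ∃ f ∈ V, p = g * f}) = d + i ∧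
      (j + i + 1) - (d + i) = j + 1 - d :=
  tau_one_hilbert_general k j d V hVd htau
end
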